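/- Let n ≥ 2 and let 0 = α_1 ≤ α_2 ≤ … ≤ α_{n+1} be the eigenvalues (with multiplicity) of M. Then the product of the nonzero eigenvalues satisfies ∏_{i=2}^{n+1} α_i = (7n+3)/25 · (1/7)^{n−1}. -/

import Mathlib

/-!
`M = D L D`, where `L = Uᵀ U` is the Laplacian of the path on `n + 1` vertices (`U` its oriented
incidence matrix) and `D` is diagonal with `D² = W = diag(1/5, 1/7, …, 1/7, 1/5)`. Hence
`M = Aᵀ A` with `A = U D`, so `M` is positive semidefinite and `χ_M = X · χ_{A Aᵀ}`: the smallest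
eigenvalue is `0` and the product of the others is `det (U W Uᵀ)`. Since the rows of `U` sum to
zero, `U W Uᵀ` is, after a change of basis of determinant `±1`, a rank-one update of a diagonal
matrix. This gives the weighted matrix-tree count `det (U W Uᵀ) = (∏ wᵢ) (∑ 1 / wᵢ)`,
which here is `(1/25) (1/7)^(n-1) (7n + 3)`.
-/

open Polynomial

/-- The tridiagonal matrix `M` (of size `(n+1) × (n+1)`). -/
noncomputable def Mmat (n : ℕ) : Matrix (Fin (n+1)) (Fin (n+1)) ℝ :=
  Matrix.of fun i j =>
    if i = j then (if i.val = 0 ∨ i.val = n then 1/5 else 2/7)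
    else if i.val + 1 = j.val ∨ j.val + 1 = i.val then
      (if min i.val j.val = 0 ∨ max i.val j.val = n then -(1/Real.sqrt 35) else -(1/7))
    else 0

namespace Matrix

section RankOneUpdate

variable {K : Type*} [Field K]

theorem det_diagonal_add_vecMulVec {ι : Type*} [Fintype ι] [DecidableEq ι] {w : ι → K}
    (hw : ∀ i, w i ≠ 0) (u v : ι → K) :
    (diagonal w + vecMulVec u v).det = (∏ i, w i) * (1 + ∑ i, v i * u i / w i) := by
  have hfactor : diagonal w + vecMulVec u v = diagonal w * (1 + vecMulVec (fun i => u i / w i) v) := by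
    rw [Matrix.mul_add, mul_one, mul_vecMulVec]
    congr
    funext i
    rw [mulVec_diagonal]
    field_simp [hw i]
  rw [hfactor, det_mul, det_diagonal, vecMulVec_eq Unit, det_one_add_replicateCol_mul_replicateRow]
  simp [dotProduct, mul_div_assoc]

theorem mul_diagonal_mul_transpose_eq_vecMulVec_add {m R : Type*} [Fintype m] [CommRing R] {n : ℕ}
    (B : Matrix m (Fin (n+1)) R) (w : Fin (n+1) → R) :
    B * diagonal w * Bᵀ = vecMulVec (w 0 • fun k => B k 0) (fun k => B k 0) +
      B.submatrix id Fin.succ * diagonal (fun j : Fin n => w j.succ) * (B.submatrix id Fin.succ)ᵀ := by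
  ext k l
  simp [mul_apply, Fin.sum_univ_succ, vecMulVec_apply, diagonal_apply]
  ring

/-- The first column of `B` is `-B'·1`, so `B W Bᵀ = B' (W' + w₀ 1 1ᵀ) B'ᵀ`. -/
theorem det_mul_diagonal_mul_transpose_of_mulVec_one_eq_zero {n : ℕ}
    (B : Matrix (Fin n) (Fin (n+1)) K) (hB : B *ᵥ 1 = 0) {w : Fin (n+1) → K} (hw : ∀ i, w i ≠ 0) :
    (B * diagonal w * Bᵀ).det =
      (B.submatrix id Fin.succ).det ^ 2 * ((∏ i, w i) * ∑ i, (w i)⁻¹) := by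
  set B' : Matrix (Fin n) (Fin n) K := B.submatrix id Fin.succ
  have hcol : (fun k => B k 0) = B' *ᵥ (-1) := by
    ext k
    have hrow := congrFun hB k
    simp only [mulVec, dotProduct, Fin.sum_univ_succ, Pi.one_apply, mul_one, Pi.zero_apply] at hrow
    simp [B', mulVec, dotProduct]
    linear_combination hrow
  have hfactor : B * diagonal w * Bᵀ =
      B' * (diagonal (fun j : Fin n => w j.succ) + vecMulVec (w 0 • (-1)) (-1)) * B'ᵀ := by
    rw [mul_diagonal_mul_transpose_eq_vecMulVec_add, hcol, ← mulVec_smul, Matrix.mul_add,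
      Matrix.add_mul, mul_vecMulVec, vecMulVec_mul, vecMul_transpose, add_comm]
  rw [hfactor, det_mul, det_mul, det_transpose,
    det_diagonal_add_vecMulVec (w := fun j : Fin n => w j.succ) (fun j => hw j.succ),
    Fin.prod_univ_succ, Fin.sum_univ_succ]
  simp only [Pi.neg_apply, Pi.one_apply, Pi.smul_apply, smul_eq_mul]
  field_simp [hw 0]
  simp only [Finset.mul_sum, div_eq_mul_inv, one_mul]

end RankOneUpdate

section PathIncidence

variable (R : Type*) [CommRing R] (n : ℕ)

def pathIncidence : Matrix (Fin n) (Fin (n+1)) R :=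
  of fun k i => (if (i : ℕ) = k then 1 else 0) - (if (i : ℕ) = k + 1 then 1 else 0)

theorem pathIncidence_mulVec_one : pathIncidence R n *ᵥ 1 = 0 := by
  ext k
  simp only [pathIncidence, mulVec, dotProduct, of_apply, Pi.one_apply, mul_one, Pi.zero_apply]
  rw [Fin.sum_univ_eq_sum_range
    (fun i => (if i = (k : ℕ) then (1 : R) else 0) - if i = k + 1 then 1 else 0)]
  simp [Finset.sum_sub_distrib]

theorem det_pathIncidence_submatrix_succ :
    ((pathIncidence R n).submatrix id Fin.succ).det = (-1) ^ n := by
  rw [det_of_isLowerTriangular]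
  · simp [pathIncidence]
  · intro k j hkj
    rw [OrderDual.toDual_lt_toDual, Fin.lt_def] at hkj
    simp only [submatrix_apply, id, pathIncidence, of_apply, Fin.val_succ]
    split_ifs <;> first | omega | simp

variable {R n} in
theorem pathIncidence_transpose_mul_self_apply (hn : 1 ≤ n) (i j : Fin (n+1)) :
    ((pathIncidence R n)ᵀ * pathIncidence R n) i j =
      if i = j then (if (i : ℕ) = 0 ∨ (i : ℕ) = n then 1 else 2)
      else if (i : ℕ) + 1 = j ∨ (j : ℕ) + 1 = i then -1 else 0 := by
  set a : ℕ := (i : ℕ)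
  set b : ℕ := (j : ℕ)
  -- regrouped so that every piece is picked out by `Finset.sum_ite_eq`, after a shift for `a = k + 1`
  have hsplit : ∀ k : ℕ, ((if a = k then (1 : R) else 0) - if a = k + 1 then 1 else 0) *
      ((if b = k then 1 else 0) - if b = k + 1 then 1 else 0) =
      (if a = k then (if b = a then 1 else 0) - (if b = a + 1 then 1 else 0) else 0)
      - (if b = k then (if a = b + 1 then 1 else 0) else 0)
      + (if a = k + 1 then (if b = a then 1 else 0) else 0) := by
    intro k
    split_ifs <;> first | omega | simp
  have hshift : ∑ k ∈ Finset.range n, (if a = k + 1 then (if b = a then (1 : R) else 0) else 0) =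
      ∑ k ∈ Finset.range (n + 1), (if a = k then (if b = a then 1 else 0) else 0) -
        (if a = 0 then (if b = a then 1 else 0) else 0) := by
    rw [Finset.sum_range_succ' _ n, add_sub_cancel_right]
  simp only [mul_apply, transpose_apply, pathIncidence, of_apply]
  rw [Fin.sum_univ_eq_sum_range (fun k => ((if a = k then (1 : R) else 0) - if a = k + 1 then 1 else 0) *
      ((if b = k then 1 else 0) - if b = k + 1 then 1 else 0))]
  simp only [hsplit, Finset.sum_add_distrib, Finset.sum_sub_distrib, hshift, Finset.sum_ite_eq,
    Finset.mem_range, ← Fin.val_inj]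
  have hi := i.isLt
  have hj := j.isLt
  split_ifs <;> first | omega | norm_num

end PathIncidence

theorem charpoly_transpose_mul_self {R : Type*} [CommRing R] {n : ℕ}
    (A : Matrix (Fin n) (Fin (n+1)) R) : (Aᵀ * A).charpoly = X * (A * Aᵀ).charpoly := by
  simpa using charpoly_mul_comm_of_le Aᵀ A (by simp)

theorem PosSemidef.nonneg_of_isRoot_charpoly {m : Type*} [Fintype m] [DecidableEq m]
    {A : Matrix m m ℝ} (hA : A.PosSemidef) {x : ℝ} (hx : A.charpoly.IsRoot x) : 0 ≤ x := by
  have hmem : x ∈ A.charpoly.roots := (mem_roots (charpoly_monic A).ne_zero).2 hx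
  rw [hA.isHermitian.roots_charpoly_eq_eigenvalues] at hmem
  obtain ⟨i, -, rfl⟩ := Multiset.mem_map.1 hmem
  simpa using hA.eigenvalues_nonneg i

theorem det_eq_prod_succ_of_X_mul_charpoly_eq_prod {K : Type*} [Field K] [LinearOrder K]
    [IsStrictOrderedRing K] {n : ℕ} (B : Matrix (Fin n) (Fin n) K) {α : Fin (n+1) → K}
    (hmono : Monotone α) (hnonneg : ∀ i, 0 ≤ α i) (h : X * B.charpoly = ∏ i, (X - C (α i))) :
    B.det = ∏ i : Fin n, α i.succ := by
  have hzero : α 0 = 0 := by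
    have hroot := congrArg (eval 0) h
    simp only [eval_mul, eval_X, zero_mul, eval_prod, eval_sub, eval_C, zero_sub] at hroot
    obtain ⟨i, -, hi⟩ := Finset.prod_eq_zero_iff.1 hroot.symm
    exact le_antisymm (neg_eq_zero.1 hi ▸ hmono (Fin.zero_le i)) (hnonneg 0)
  have hchar : B.charpoly = ∏ i : Fin n, (X - C (α i.succ)) := by
    refine mul_left_cancel₀ X_ne_zero ?_
    rw [h, Fin.prod_univ_succ, hzero, C_0, sub_zero]
  rw [det_eq_sign_charpoly_coeff, hchar, coeff_zero_eq_eval_zero, eval_prod]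
  simp [Finset.prod_neg, ← mul_assoc, ← pow_add, ← two_mul, pow_mul]

end Matrix

open Matrix

noncomputable def mmatWeight (n : ℕ) (i : Fin (n+1)) : ℝ :=
  if (i : ℕ) = 0 ∨ (i : ℕ) = n then 1/5 else 1/7

theorem mmatWeight_pos (n : ℕ) (i : Fin (n+1)) : 0 < mmatWeight n i := by
  unfold mmatWeight
  split_ifs <;> norm_num

noncomputable def mmatFactor (n : ℕ) : Matrix (Fin n) (Fin (n+1)) ℝ :=
  pathIncidence ℝ n * diagonal fun i => √(mmatWeight n i)

theorem Mmat_eq_transpose_mul_self {n : ℕ} (hn : 2 ≤ n) :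
    Mmat n = (mmatFactor n)ᵀ * mmatFactor n := by
  have h5 : √(1/5 : ℝ) * √(1/5) = 1/5 := Real.mul_self_sqrt (by norm_num)
  have h7 : √(1/7 : ℝ) * √(1/7) = 1/7 := Real.mul_self_sqrt (by norm_num)
  have h35 : √(1/5 : ℝ) * √(1/7) = 1/√35 := by
    rw [← Real.sqrt_mul (by norm_num), one_div (√35), ← Real.sqrt_inv]
    norm_num
  rw [mmatFactor, transpose_mul, diagonal_transpose, Matrix.mul_assoc,
    ← Matrix.mul_assoc (pathIncidence ℝ n)ᵀ]
  ext i j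
  rw [diagonal_mul, mul_diagonal, pathIncidence_transpose_mul_self_apply (by omega)]
  simp only [Mmat, mmatWeight, of_apply, ← Fin.val_inj]
  split_ifs <;> first | omega | linear_combination -h5 | linear_combination -2 * h7 |
    linear_combination h35 | linear_combination h7 | ring

theorem mmatWeight_castSucc_succ (m : ℕ) (j : Fin m) : mmatWeight (m + 1) j.castSucc.succ = 1/7 :=
  if_neg (by simp; omega)

theorem prod_mmatWeight {n : ℕ} (hn : 1 ≤ n) :
    ∏ i, mmatWeight n i = (1/5) ^ 2 * (1/7) ^ (n - 1) := by
  obtain ⟨m, rfl⟩ : ∃ m, n = m + 1 := ⟨n - 1, by omega⟩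
  rw [Fin.prod_univ_succ, Fin.prod_univ_castSucc]
  simp only [mmatWeight_castSucc_succ, Finset.prod_const, Finset.card_univ, Fintype.card_fin]
  norm_num [mmatWeight]
  ring

theorem sum_inv_mmatWeight {n : ℕ} (hn : 1 ≤ n) : ∑ i, (mmatWeight n i)⁻¹ = 7 * n + 3 := by
  obtain ⟨m, rfl⟩ : ∃ m, n = m + 1 := ⟨n - 1, by omega⟩
  rw [Fin.sum_univ_succ, Fin.sum_univ_castSucc]
  simp only [mmatWeight_castSucc_succ, Finset.sum_const, Finset.card_univ, Fintype.card_fin]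
  norm_num [mmatWeight]
  ring

theorem mmatFactor_mul_transpose (n : ℕ) :
    mmatFactor n * (mmatFactor n)ᵀ =
      pathIncidence ℝ n * diagonal (mmatWeight n) * (pathIncidence ℝ n)ᵀ := by
  rw [mmatFactor, transpose_mul, diagonal_transpose, Matrix.mul_assoc,
    ← Matrix.mul_assoc (diagonal _), diagonal_mul_diagonal, ← Matrix.mul_assoc]
  congr
  funext i
  exact Real.mul_self_sqrt (mmatWeight_pos n i).le

theorem det_mmatFactor_mul_transpose {n : ℕ} (hn : 1 ≤ n) :
    (mmatFactor n * (mmatFactor n)ᵀ).det = (7 * (n : ℝ) + 3) / 25 * (1/7) ^ (n - 1) := by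
  rw [mmatFactor_mul_transpose, det_mul_diagonal_mul_transpose_of_mulVec_one_eq_zero _
      (pathIncidence_mulVec_one ℝ n) fun i => (mmatWeight_pos n i).ne',
    det_pathIncidence_submatrix_succ, prod_mmatWeight hn, sum_inv_mmatWeight hn,
    ← pow_mul, pow_mul', neg_one_sq, one_pow]
  ring

theorem prod_nonzero_eigenvalues_Mmat (n : ℕ) (hn : 2 ≤ n)
    (α : Fin (n+1) → ℝ) (hmono : Monotone α)
    (hchar : (Mmat n).charpoly = ∏ i, (X - C (α i))) :
    (∏ i ∈ Finset.univ.filter (fun i : Fin (n+1) => i.val ≠ 0), α i)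
      = (7 * (n : ℝ) + 3) / 25 * (1/7)^(n-1) := by
  have hM := Mmat_eq_transpose_mul_self hn
  have hpsd : (Mmat n).PosSemidef := by
    simpa [hM] using posSemidef_conjTranspose_mul_self (mmatFactor n)
  have hnonneg : ∀ i, 0 ≤ α i := fun i => hpsd.nonneg_of_isRoot_charpoly <| by
    rw [hchar, IsRoot, eval_prod]
    exact Finset.prod_eq_zero (Finset.mem_univ i) (by simp)
  have hX : X * (mmatFactor n * (mmatFactor n)ᵀ).charpoly = ∏ i, (X - C (α i)) := by
    rw [← hchar, hM, charpoly_transpose_mul_self]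
  rw [← det_mmatFactor_mul_transpose (by omega), det_eq_prod_succ_of_X_mul_charpoly_eq_prod _ hmono hnonneg hX,
    Finset.prod_filter, Fin.prod_univ_succ]
  simp
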